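/- Let f : H₁ × H₂ → ℝ be continuously differentiable on Hilbert spaces H₁, H₂, with ∇_u f being L_u-Lipschitz in u (for fixed v) and L_{uv}-Lipschitz in v (for fixed u), and ∇_v f being L_v-Lipschitz in v (for fixed u) and L_{vu}-Lipschitz in u (for fixed v). Let χ = max{L_{uv}, L_{vu}} / √(L_u L_v). Then for all u, u' ∈ H₁ and v, v' ∈ H₂: f(u', v') − f(u, v) ≤ ⟪∇_u f(u,v), u' − u⟫ + ((1+χ)/2) L_u ‖u' − u‖² + ⟪∇_v f(u,v), v' − v⟫ + ((1+χ)/2) L_v ‖v' − v‖². -/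

import Mathlib

open RealInnerProductSpace Set

/- Descent along each block separately: moving `u` costs at most `⟪∇_u f, u' - u⟫ + L_u/2 ‖u' - u‖²`,
and then moving `v` from the new point `u'` costs at most `⟪∇_v f(u', v), v' - v⟫ + L_v/2 ‖v' - v‖²`.
Replacing `∇_v f(u', v)` by `∇_v f(u, v)` costs `L_{vu} ‖u' - u‖ ‖v' - v‖`, which AM–GM splits
between the two quadratic terms with weight `χ/2` each. -/

/-- The descent lemma: with `d = y - x`, the function
`t ↦ f (x + t • d) - t * f' x d - L / 2 * t ^ 2 * ‖d‖ ^ 2` has nonpositive derivative on `[0, 1]`. -/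
theorem le_add_fderiv_add_of_norm_fderiv_sub_le {E : Type*} [NormedAddCommGroup E]
    [NormedSpace ℝ E] {f : E → ℝ} {f' : E → E →L[ℝ] ℝ} {L : ℝ}
    (hf : ∀ x, HasFDerivAt f (f' x) x) (hf' : ∀ x y, ‖f' x - f' y‖ ≤ L * ‖x - y‖) (x y : E) :
    f y ≤ f x + f' x (y - x) + L / 2 * ‖y - x‖ ^ 2 := by
  set d := y - x
  set φ : ℝ → ℝ := fun t => f (x + t • d) - t * f' x d - L / 2 * t ^ 2 * ‖d‖ ^ 2
  have hφ : ∀ t, HasDerivAt φ (f' (x + t • d) d - f' x d - L * t * ‖d‖ ^ 2) t := by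
    intro t
    have hline : HasDerivAt (fun t : ℝ => x + t • d) d t := by
      simpa using ((hasDerivAt_id t).smul_const d).const_add x
    have := (((hf _).comp_hasDerivAt t hline).sub ((hasDerivAt_id t).mul_const (f' x d))).sub
      (((hasDerivAt_pow 2 t).const_mul (L / 2)).mul_const (‖d‖ ^ 2))
    exact this.congr_deriv (by simp only [Nat.cast_ofNat]; ring)
  have hφ'_nonpos : ∀ t ∈ interior (Icc (0 : ℝ) 1),
      f' (x + t • d) d - f' x d - L * t * ‖d‖ ^ 2 ≤ 0 := by
    intro t ht
    have ht0 : 0 ≤ t := (interior_subset ht).1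
    have : (f' (x + t • d) - f' x) d ≤ L * t * ‖d‖ ^ 2 :=
      calc (f' (x + t • d) - f' x) d ≤ ‖f' (x + t • d) - f' x‖ * ‖d‖ :=
            (le_abs_self _).trans ((f' (x + t • d) - f' x).le_opNorm d)
        _ ≤ L * ‖x + t • d - x‖ * ‖d‖ := by gcongr; exact hf' _ _
        _ = L * t * ‖d‖ ^ 2 := by
            rw [add_sub_cancel_left, norm_smul, Real.norm_of_nonneg ht0]; ring
    rw [sub_apply] at this
    linarith
  have hanti : AntitoneOn φ (Icc 0 1) :=
    antitoneOn_of_hasDerivWithinAt_nonpos (convex_Icc 0 1)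
      (fun t _ => (hφ t).continuousAt.continuousWithinAt)
      (fun t _ => (hφ t).hasDerivWithinAt) hφ'_nonpos
  have := hanti (left_mem_Icc.2 zero_le_one) (right_mem_Icc.2 zero_le_one) zero_le_one
  simp only [φ, d, zero_smul, one_smul, add_zero, add_sub_cancel] at this
  linarith

theorem le_add_inner_add_of_norm_gradient_sub_le {H : Type*} [NormedAddCommGroup H]
    [InnerProductSpace ℝ H] [CompleteSpace H] {f : H → ℝ} {g : H → H} {L : ℝ}
    (hf : ∀ x, HasGradientAt f (g x) x) (hg : ∀ x y, ‖g x - g y‖ ≤ L * ‖x - y‖) (x y : H) :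
    f y ≤ f x + ⟪g x, y - x⟫ + L / 2 * ‖y - x‖ ^ 2 :=
  le_add_fderiv_add_of_norm_fderiv_sub_le (fun x => (hf x).hasFDerivAt)
    (fun x y => by rw [← map_sub, LinearIsometryEquiv.norm_map]; exact hg x y) x y

theorem sqrt_mul_mul_le_add_sq {a b x y : ℝ} (ha : 0 ≤ a) (hb : 0 ≤ b) :
    √(a * b) * (x * y) ≤ (a * x ^ 2 + b * y ^ 2) / 2 := by
  rw [Real.sqrt_mul ha]
  nlinarith [sq_nonneg (√a * x - √b * y), Real.sq_sqrt ha, Real.sq_sqrt hb]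

theorem stmt_0_general {H₁ H₂ : Type*}
    [NormedAddCommGroup H₁] [InnerProductSpace ℝ H₁] [CompleteSpace H₁]
    [NormedAddCommGroup H₂] [InnerProductSpace ℝ H₂] [CompleteSpace H₂]
    (f : H₁ → H₂ → ℝ) (gu : H₁ → H₂ → H₁) (gv : H₁ → H₂ → H₂)
    (Lu Lv Luv Lvu : ℝ) (hLu : 0 < Lu) (hLv : 0 < Lv)
    (hLvu : 0 ≤ Lvu)
    (hgu : ∀ u v, HasGradientAt (fun u' => f u' v) (gu u v) u)
    (hgv : ∀ u v, HasGradientAt (fun v' => f u v') (gv u v) v)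
    (hLipU : ∀ v u u', ‖gu u v - gu u' v‖ ≤ Lu * ‖u - u'‖)
    (hLipV : ∀ u v v', ‖gv u v - gv u v'‖ ≤ Lv * ‖v - v'‖)
    (hLipVU : ∀ v u u', ‖gv u v - gv u' v‖ ≤ Lvu * ‖u - u'‖)
    (χ : ℝ) (hχ : χ = max Luv Lvu / Real.sqrt (Lu * Lv)) :
    ∀ (u u' : H₁) (v v' : H₂),
      f u' v' - f u v ≤
        ⟪gu u v, u' - u⟫ + (1 + χ) / 2 * Lu * ‖u' - u‖ ^ 2
          + ⟪gv u v, v' - v⟫ + (1 + χ) / 2 * Lv * ‖v' - v‖ ^ 2 := by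
  intro u u' v v'
  have hstep_u := le_add_inner_add_of_norm_gradient_sub_le (hgu · v) (hLipU v) u u'
  have hstep_v := le_add_inner_add_of_norm_gradient_sub_le (hgv u') (hLipV u') v v'
  have hcross : ⟪gv u' v - gv u v, v' - v⟫ ≤ Lvu * ‖u' - u‖ * ‖v' - v‖ :=
    (real_inner_le_norm _ _).trans (by gcongr; exact hLipVU v u' u)
  have hsqrt : 0 < √(Lu * Lv) := Real.sqrt_pos.2 (mul_pos hLu hLv)
  have hχ_nonneg : 0 ≤ χ := hχ ▸ div_nonneg (hLvu.trans (le_max_right _ _)) hsqrt.le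
  have hLvu_le : Lvu ≤ χ * √(Lu * Lv) := by
    rw [hχ, div_mul_cancel₀ _ hsqrt.ne']
    exact le_max_right _ _
  have hamgm : Lvu * ‖u' - u‖ * ‖v' - v‖ ≤ χ / 2 * (Lu * ‖u' - u‖ ^ 2 + Lv * ‖v' - v‖ ^ 2) :=
    calc Lvu * ‖u' - u‖ * ‖v' - v‖ ≤ χ * (√(Lu * Lv) * (‖u' - u‖ * ‖v' - v‖)) := by
          rw [mul_assoc, ← mul_assoc χ]; gcongr
      _ ≤ χ * ((Lu * ‖u' - u‖ ^ 2 + Lv * ‖v' - v‖ ^ 2) / 2) := by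
          gcongr; exact sqrt_mul_mul_le_add_sq hLu.le hLv.le
      _ = χ / 2 * (Lu * ‖u' - u‖ ^ 2 + Lv * ‖v' - v‖ ^ 2) := by ring
  rw [inner_sub_left] at hcross
  linarith

/-- Lemma 1: block-smoothness descent lemma for functions of two blocks. -/
theorem stmt_0 {H₁ H₂ : Type*}
    [NormedAddCommGroup H₁] [InnerProductSpace ℝ H₁] [CompleteSpace H₁]
    [NormedAddCommGroup H₂] [InnerProductSpace ℝ H₂] [CompleteSpace H₂]
    (f : H₁ → H₂ → ℝ) (gu : H₁ → H₂ → H₁) (gv : H₁ → H₂ → H₂)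
    (Lu Lv Luv Lvu : ℝ) (hLu : 0 < Lu) (hLv : 0 < Lv)
    (hLuv : 0 ≤ Luv) (hLvu : 0 ≤ Lvu)
    (hgu : ∀ u v, HasGradientAt (fun u' => f u' v) (gu u v) u)
    (hgv : ∀ u v, HasGradientAt (fun v' => f u v') (gv u v) v)
    (hgu_cont : Continuous fun p : H₁ × H₂ => gu p.1 p.2)
    (hgv_cont : Continuous fun p : H₁ × H₂ => gv p.1 p.2)
    (hLipU : ∀ v u u', ‖gu u v - gu u' v‖ ≤ Lu * ‖u - u'‖)
    (hLipUV : ∀ u v v', ‖gu u v - gu u v'‖ ≤ Luv * ‖v - v'‖)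
    (hLipV : ∀ u v v', ‖gv u v - gv u v'‖ ≤ Lv * ‖v - v'‖)
    (hLipVU : ∀ v u u', ‖gv u v - gv u' v‖ ≤ Lvu * ‖u - u'‖)
    (χ : ℝ) (hχ : χ = max Luv Lvu / Real.sqrt (Lu * Lv)) :
    ∀ (u u' : H₁) (v v' : H₂),
      f u' v' - f u v ≤
        ⟪gu u v, u' - u⟫ + (1 + χ) / 2 * Lu * ‖u' - u‖ ^ 2
          + ⟪gv u v, v' - v⟫ + (1 + χ) / 2 * Lv * ‖v' - v‖ ^ 2 :=
  stmt_0_general f gu gv Lu Lv Luv Lvu hLu hLv hLvu hgu hgv hLipU hLipV hLipVU χ hχ
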